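/- arXiv:1805.02632 — 6 statements merged into one kernel-verified Lean document; each statement's English description precedes it below -/
import Mathlib

section
/- Let W ∈ ℝ^{n×n} be symmetric positive definite, S ∈ ℝ^{n×τ} with SᵀWS invertible, and J, G ∈ ℝ^{d×n}. Set Π := S(SᵀWS)⁻¹SᵀW and J⁺ := J − (J − G)Π. Then: (i) J⁺S = GS, and for every J' ∈ ℝ^{d×n} with J'S = GS one has ‖J⁺ − J‖²_{W⁻¹} ≤ ‖J' − J‖²_{W⁻¹} (so J⁺ solves the sketch-and-project problem min ‖J' − J‖²_{W⁻¹} subject to J'S = GS); and (ii) J⁺ = J + YSᵀW with Y := (G − J)S(SᵀWS)⁻¹, and for every Y' ∈ ℝ^{d×τ} one has ‖J⁺ − G‖²_{W⁻¹} ≤ ‖J + Y'SᵀW − G‖²_{W⁻¹} (so J⁺ also solves the constrain-and-approximate problem). -/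
/-!
Both problems are least-squares problems in the inner product `⟨A, B⟩ := Tr(A W⁻¹ Bᵀ)`, and
`J⁺ - J = Y SᵀW` for `Y := (G - J)S(SᵀWS)⁻¹`. Matrices of the form `X SᵀW` are orthogonal to
every `B` with `BS = 0`, since `X SᵀW W⁻¹ Bᵀ = X (BS)ᵀ`. In (i) the competitors differ from `J⁺`
by such a `B`, and in (ii) the residual `J⁺ - G` is such a `B` while the competitors differ from
`J⁺` by matrices `X SᵀW`; Pythagoras finishes both.
-/

open Matrix

/-- Weighted Frobenius norm squared: ‖X‖²_{W⁻¹} = Tr(X W⁻¹ Xᵀ). -/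
noncomputable def wnorm2 {d n : ℕ} (W : Matrix (Fin n) (Fin n) ℝ)
    (X : Matrix (Fin d) (Fin n) ℝ) : ℝ :=
  Matrix.trace (X * W⁻¹ * Xᵀ)

section WeightedNorm

variable {d n τ : ℕ} {W : Matrix (Fin n) (Fin n) ℝ}

lemma wnorm2_nonneg (hW : W.PosDef) (X : Matrix (Fin d) (Fin n) ℝ) : 0 ≤ wnorm2 W X :=
  (hW.posSemidef.inv.mul_mul_conjTranspose_same X).trace_nonneg

lemma wnorm2_add_of_trace_eq_zero (hW : W.IsSymm) {A B : Matrix (Fin d) (Fin n) ℝ}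
    (hAB : trace (A * W⁻¹ * Bᵀ) = 0) : wnorm2 W (A + B) = wnorm2 W A + wnorm2 W B := by
  have hinv : (W⁻¹)ᵀ = W⁻¹ := by rw [transpose_nonsing_inv, hW.eq]
  have hBA : trace (B * W⁻¹ * Aᵀ) = 0 := by
    rw [← trace_transpose, transpose_mul, transpose_mul, transpose_transpose, hinv,
      ← Matrix.mul_assoc, hAB]
  simp only [wnorm2, transpose_add, Matrix.add_mul, Matrix.mul_add, trace_add, hAB, hBA]
  ring

lemma trace_mul_inv_mul_transpose_eq_zero (hW : IsUnit W.det) (X : Matrix (Fin d) (Fin τ) ℝ)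
    {S : Matrix (Fin n) (Fin τ) ℝ} {B : Matrix (Fin d) (Fin n) ℝ} (hB : B * S = 0) :
    trace (X * (Sᵀ * W) * W⁻¹ * Bᵀ) = 0 := by
  rw [Matrix.mul_assoc X, Matrix.mul_assoc Sᵀ, mul_nonsing_inv _ hW, Matrix.mul_one,
    Matrix.mul_assoc, ← transpose_mul, hB, transpose_zero, Matrix.mul_zero, trace_zero]

lemma wnorm2_add_eq_of_mul_eq_zero (hW : W.PosDef) (X : Matrix (Fin d) (Fin τ) ℝ)
    {S : Matrix (Fin n) (Fin τ) ℝ} {B : Matrix (Fin d) (Fin n) ℝ} (hB : B * S = 0) :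
    wnorm2 W (X * (Sᵀ * W) + B) = wnorm2 W (X * (Sᵀ * W)) + wnorm2 W B :=
  wnorm2_add_of_trace_eq_zero (isHermitian_iff_isSymm.mp hW.isHermitian)
    (trace_mul_inv_mul_transpose_eq_zero ((isUnit_iff_isUnit_det W).mp hW.isUnit) X hB)

end WeightedNorm

/-- Duality of the sketch-and-project and constrain-and-approximate problems:
`J⁺ := J − (J − G)Π` (with `Π := S(SᵀWS)⁻¹SᵀW`) solves both. -/
theorem sketch_and_project_constrain_and_approximate
    {d n τ : ℕ} (W : Matrix (Fin n) (Fin n) ℝ) (hW : W.PosDef)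
    (S : Matrix (Fin n) (Fin τ) ℝ) (hS : IsUnit (Sᵀ * W * S))
    (J G Jp : Matrix (Fin d) (Fin n) ℝ)
    (Pr : Matrix (Fin n) (Fin n) ℝ)
    (hPr : Pr = S * (Sᵀ * W * S)⁻¹ * Sᵀ * W)
    (hJp : Jp = J - (J - G) * Pr) :
    (Jp * S = G * S ∧
      ∀ J' : Matrix (Fin d) (Fin n) ℝ, J' * S = G * S →
        wnorm2 W (Jp - J) ≤ wnorm2 W (J' - J)) ∧
    (Jp = J + ((G - J) * S * (Sᵀ * W * S)⁻¹) * (Sᵀ * W) ∧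
      ∀ Y' : Matrix (Fin d) (Fin τ) ℝ,
        wnorm2 W (Jp - G) ≤ wnorm2 W (J + Y' * (Sᵀ * W) - G)) := by
  set Y := (G - J) * S * (Sᵀ * W * S)⁻¹
  have hJpY : Jp = J + Y * (Sᵀ * W) := by
    rw [hJp, hPr, ← neg_sub G J]
    simp only [Y, Matrix.neg_mul, Matrix.mul_assoc, sub_neg_eq_add]
  have hYS : Y * (Sᵀ * W) * S = (G - J) * S := by
    simp only [Y, Matrix.mul_assoc]
    rw [← Matrix.mul_assoc Sᵀ W S,
      nonsing_inv_mul _ ((isUnit_iff_isUnit_det _).mp hS), Matrix.mul_one]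
  have hJpS : Jp * S = G * S := by
    rw [hJpY, Matrix.add_mul, hYS, Matrix.sub_mul, add_sub_cancel]
  refine ⟨⟨hJpS, fun J' hJ' => ?_⟩, ⟨hJpY, fun Y' => ?_⟩⟩
  · have hB : (J' - Jp) * S = 0 := by rw [Matrix.sub_mul, hJ', hJpS, sub_self]
    have hsplit : J' - J = Y * (Sᵀ * W) + (J' - Jp) := by rw [hJpY]; abel
    rw [hsplit, wnorm2_add_eq_of_mul_eq_zero hW Y hB, hJpY, add_sub_cancel_left]
    exact le_add_of_nonneg_right (wnorm2_nonneg hW _)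
  · have hB : (Jp - G) * S = 0 := by rw [Matrix.sub_mul, hJpS, sub_self]
    have hsplit : J + Y' * (Sᵀ * W) - G = (Y' - Y) * (Sᵀ * W) + (Jp - G) := by
      rw [hJpY, Matrix.sub_mul]; abel
    rw [hsplit, wnorm2_add_eq_of_mul_eq_zero hW (Y' - Y) hB]
    exact le_add_of_nonneg_left (wnorm2_nonneg hW _)
end

section
/- Let W ∈ ℝ^{n×n} be symmetric positive definite. (a) For any S ∈ ℝ^{n×τ} with SᵀWS invertible, setting Π := S(SᵀWS)⁻¹SᵀW and H := S(SᵀWS)⁻¹Sᵀ, for all M, N ∈ ℝ^{d×n}: ‖M(I − Π) + NΠ‖²_{W⁻¹} = ‖M(I − Π)‖²_{W⁻¹} + ‖NΠ‖²_{W⁻¹}, and ‖NΠ‖²_{W⁻¹} = Tr(N H Nᵀ). (b) For a finitely supported sketch distribution (S_j, q_j)_{j=1}^m, setting H̄ := ∑_j q_j H_{S_j} and κ := λmin(W^{1/2} H̄ W^{1/2}), for all M, N ∈ ℝ^{d×n}: ∑_j q_j ‖M(I − Π_{S_j}) + N Π_{S_j}‖²_{W⁻¹} ≤ (1 − κ)‖M‖²_{W⁻¹}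 + Tr(N H̄ Nᵀ). -/
open Matrix

/-- Smallest eigenvalue of a (symmetric) real matrix, as the infimum of its real spectrum. -/
noncomputable def lammin {n : ℕ} (M : Matrix (Fin n) (Fin n) ℝ) : ℝ :=
  sInf (spectrum ℝ M)

/-! Write `P = H W` with `H` symmetric and `H W H = H`. Then `(I - P) W⁻¹ Pᵀ = 0`,
`P W⁻¹ Pᵀ = H` and `(I - P) W⁻¹ (I - P)ᵀ = W⁻¹ - H`, which gives (a) and, for each sketch,
`‖M (I - P) + N P‖² = ‖M‖² - Tr (M H Mᵀ) + Tr (N H Nᵀ)`. Averaging with weights summing to one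
replaces `H` by `H̄`, and the substitution `Y = M W^{-1/2}` turns `κ ‖M‖² ≤ Tr (M H̄ Mᵀ)` into
`λmin K · Tr (Y Yᵀ) ≤ Tr (Y K Yᵀ)` for `K = W^{1/2} H̄ W^{1/2}`, which holds because
`K - λmin K • I` is positive semidefinite. -/

namespace Matrix

section SketchedInverse

variable {R ι σ : Type*} [CommRing R] [Fintype ι] [Fintype σ] [DecidableEq σ]

theorem isSymm_mul_inv_mul_transpose {W : Matrix ι ι R} (hW : W.IsSymm) (S : Matrix ι σ R) :
    (S * (Sᵀ * W * S)⁻¹ * Sᵀ).IsSymm := by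
  simp only [IsSymm, transpose_mul, transpose_transpose, transpose_nonsing_inv, hW.eq,
    Matrix.mul_assoc]

theorem mul_inv_mul_transpose_mul_mul_self {W : Matrix ι ι R} {S : Matrix ι σ R}
    (hS : IsUnit (Sᵀ * W * S)) :
    S * (Sᵀ * W * S)⁻¹ * Sᵀ * W * (S * (Sᵀ * W * S)⁻¹ * Sᵀ) = S * (Sᵀ * W * S)⁻¹ * Sᵀ := by
  calc S * (Sᵀ * W * S)⁻¹ * Sᵀ * W * (S * (Sᵀ * W * S)⁻¹ * Sᵀ)
      = S * ((Sᵀ * W * S)⁻¹ * (Sᵀ * W * S)) * (Sᵀ * W * S)⁻¹ * Sᵀ := by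
        simp only [Matrix.mul_assoc]
    _ = S * (Sᵀ * W * S)⁻¹ * Sᵀ := by
        rw [nonsing_inv_mul _ ((isUnit_iff_isUnit_det _).mp hS), Matrix.mul_one]

end SketchedInverse

section WeightedProjection

variable {R ι : Type*} [CommRing R] [Fintype ι] [DecidableEq ι] {W H : Matrix ι ι R}

theorem mul_mul_inv_mul_transpose_mul (hW : W.IsSymm) (hWu : IsUnit W) (hH : H.IsSymm)
    (hHWH : H * W * H = H) : H * W * W⁻¹ * (H * W)ᵀ = H := by
  rw [mul_nonsing_inv_cancel_right W H ((isUnit_iff_isUnit_det W).mp hWu), transpose_mul, hW.eq,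
    hH.eq, ← Matrix.mul_assoc, hHWH]

theorem one_sub_mul_inv_mul_transpose_mul (hW : W.IsSymm) (hWu : IsUnit W) (hH : H.IsSymm)
    (hHWH : H * W * H = H) : (1 - H * W) * W⁻¹ * (H * W)ᵀ = 0 := by
  rw [Matrix.sub_mul, Matrix.sub_mul, mul_mul_inv_mul_transpose_mul hW hWu hH hHWH,
    Matrix.one_mul, transpose_mul, hW.eq, hH.eq,
    nonsing_inv_mul_cancel_left W H ((isUnit_iff_isUnit_det W).mp hWu), sub_self]

theorem one_sub_mul_inv_mul_transpose_one_sub (hW : W.IsSymm) (hWu : IsUnit W)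
    (hH : H.IsSymm) (hHWH : H * W * H = H) : (1 - H * W) * W⁻¹ * (1 - H * W)ᵀ = W⁻¹ - H := by
  rw [transpose_sub, transpose_one, Matrix.mul_sub, Matrix.mul_one,
    one_sub_mul_inv_mul_transpose_mul hW hWu hH hHWH, sub_zero, Matrix.sub_mul, Matrix.one_mul,
    mul_nonsing_inv_cancel_right W H ((isUnit_iff_isUnit_det W).mp hWu)]

end WeightedProjection

theorem trace_mul_sum_smul_mul_transpose {R ι κ J : Type*} [CommRing R] [Fintype ι] [Fintype κ]
    (s : Finset J) (X : Matrix κ ι R) (c : J → R) (H : J → Matrix ι ι R) :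
    trace (X * (∑ j ∈ s, c j • H j) * Xᵀ) = ∑ j ∈ s, c j * trace (X * H j * Xᵀ) := by
  simp only [Matrix.mul_sum, Matrix.sum_mul, trace_sum, Matrix.mul_smul, Matrix.smul_mul,
    trace_smul, smul_eq_mul]

open scoped MatrixOrder in
theorem posSemidef_sub_lammin_smul_one {n : ℕ} {K : Matrix (Fin n) (Fin n) ℝ}
    (hK : K.IsHermitian) : (K - lammin K • (1 : Matrix (Fin n) (Fin n) ℝ)).PosSemidef := by
  rw [← nonneg_iff_posSemidef, sub_nonneg, ← Algebra.algebraMap_eq_smul_one,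
    algebraMap_le_iff_le_spectrum (hK : IsSelfAdjoint K)]
  exact fun _ hx => csInf_le (finite_spectrum K).bddBelow hx

theorem lammin_mul_trace_mul_transpose_le {d n : ℕ} {K : Matrix (Fin n) (Fin n) ℝ}
    (hK : K.IsHermitian) (Y : Matrix (Fin d) (Fin n) ℝ) :
    lammin K * trace (Y * Yᵀ) ≤ trace (Y * K * Yᵀ) := by
  have h := ((posSemidef_sub_lammin_smul_one hK).mul_mul_conjTranspose_same Y).trace_nonneg
  rw [conjTranspose_eq_transpose_of_trivial, Matrix.mul_sub, Matrix.sub_mul, trace_sub,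
    Matrix.mul_smul, Matrix.smul_mul, Matrix.mul_one, trace_smul, smul_eq_mul] at h
  linarith

end Matrix

section WeightedNorm

variable {d n : ℕ} {W H : Matrix (Fin n) (Fin n) ℝ}

theorem wnorm2_mul (W : Matrix (Fin n) (Fin n) ℝ) (M : Matrix (Fin d) (Fin n) ℝ)
    (X : Matrix (Fin n) (Fin n) ℝ) : wnorm2 W (M * X) = trace (M * (X * W⁻¹ * Xᵀ) * Mᵀ) := by
  simp only [wnorm2, transpose_mul, Matrix.mul_assoc]

theorem wnorm2_add_of_mul_inv_mul_transpose_eq_zero (hW : W.IsSymm)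
    {X Y : Matrix (Fin n) (Fin n) ℝ} (hXY : X * W⁻¹ * Yᵀ = 0) (M N : Matrix (Fin d) (Fin n) ℝ) :
    wnorm2 W (M * X + N * Y) = wnorm2 W (M * X) + wnorm2 W (N * Y) := by
  have hYX : Y * W⁻¹ * Xᵀ = 0 := by
    simpa only [transpose_mul, transpose_transpose, hW.inv.eq, Matrix.mul_assoc,
      transpose_zero] using congrArg transpose hXY
  have cross : ∀ {A B : Matrix (Fin n) (Fin n) ℝ} (P Q : Matrix (Fin d) (Fin n) ℝ),
      A * W⁻¹ * Bᵀ = 0 → P * A * W⁻¹ * (Q * B)ᵀ = 0 := fun {A B} P Q h => by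
    rw [show P * A * W⁻¹ * (Q * B)ᵀ = P * (A * W⁻¹ * Bᵀ) * Qᵀ by
      simp only [transpose_mul, Matrix.mul_assoc], h, Matrix.mul_zero, Matrix.zero_mul]
  simp only [wnorm2, Matrix.add_mul, Matrix.mul_add, transpose_add, cross _ _ hXY,
    cross _ _ hYX, add_zero, zero_add, trace_add]

variable (hW : W.IsSymm) (hWu : IsUnit W) (hH : H.IsSymm) (hHWH : H * W * H = H)
include hW hWu hH hHWH

theorem wnorm2_complement_add_projection (M N : Matrix (Fin d) (Fin n) ℝ) :
    wnorm2 W (M * (1 - H * W) + N * (H * W))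
      = wnorm2 W (M * (1 - H * W)) + wnorm2 W (N * (H * W)) :=
  wnorm2_add_of_mul_inv_mul_transpose_eq_zero hW
    (one_sub_mul_inv_mul_transpose_mul hW hWu hH hHWH) M N

theorem wnorm2_mul_projection (N : Matrix (Fin d) (Fin n) ℝ) :
    wnorm2 W (N * (H * W)) = trace (N * H * Nᵀ) := by
  rw [wnorm2_mul, mul_mul_inv_mul_transpose_mul hW hWu hH hHWH]

theorem wnorm2_mul_complement (M : Matrix (Fin d) (Fin n) ℝ) :
    wnorm2 W (M * (1 - H * W)) = wnorm2 W M - trace (M * H * Mᵀ) := by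
  rw [wnorm2_mul, one_sub_mul_inv_mul_transpose_one_sub hW hWu hH hHWH, Matrix.mul_sub,
    Matrix.sub_mul, trace_sub, wnorm2]

theorem wnorm2_complement_add_projection_eq (M N : Matrix (Fin d) (Fin n) ℝ) :
    wnorm2 W (M * (1 - H * W) + N * (H * W))
      = wnorm2 W M - trace (M * H * Mᵀ) + trace (N * H * Nᵀ) := by
  rw [wnorm2_complement_add_projection hW hWu hH hHWH, wnorm2_mul_complement hW hWu hH hHWH,
    wnorm2_mul_projection hW hWu hH hHWH]

end WeightedNorm

theorem lammin_mul_wnorm2_le {d n : ℕ} {W Wh H : Matrix (Fin n) (Fin n) ℝ} (hWh : Wh.PosDef)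
    (hWh2 : Wh * Wh = W) (hH : H.IsSymm) (M : Matrix (Fin d) (Fin n) ℝ) :
    lammin (Wh * H * Wh) * wnorm2 W M ≤ trace (M * H * Mᵀ) := by
  have hWhu : IsUnit Wh.det := (isUnit_iff_isUnit_det Wh).mp hWh.isUnit
  have hWhs : Whᵀ = Wh := (isHermitian_iff_isSymm.mp hWh.isHermitian).eq
  have hK : (Wh * H * Wh).IsHermitian := by
    rw [isHermitian_iff_isSymm, IsSymm]
    simp only [transpose_mul, hWhs, hH.eq, Matrix.mul_assoc]
  have hM : M = M * Wh⁻¹ * Wh := (nonsing_inv_mul_cancel_right Wh M hWhu).symm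
  have hnorm : wnorm2 W M = trace (M * Wh⁻¹ * (M * Wh⁻¹)ᵀ) := by
    rw [wnorm2, ← hWh2, Matrix.mul_inv_rev, transpose_mul, transpose_nonsing_inv, hWhs]
    simp only [Matrix.mul_assoc]
  have htrace : trace (M * H * Mᵀ) = trace (M * Wh⁻¹ * (Wh * H * Wh) * (M * Wh⁻¹)ᵀ) := by
    conv_lhs => rw [hM]
    simp only [transpose_mul, hWhs, Matrix.mul_assoc]
  rw [hnorm, htrace]
  exact lammin_mul_trace_mul_transpose_le hK _

theorem projection_norm_identities_and_contraction_general
    {d n m : ℕ}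
    (W Wh : Matrix (Fin n) (Fin n) ℝ) (hW : W.PosDef)
    (hWh : Wh.PosDef) (hWh2 : Wh * Wh = W)
    (τs : Fin m → ℕ) (S : ∀ j, Matrix (Fin n) (Fin (τs j)) ℝ)
    (hS : ∀ j, IsUnit ((S j)ᵀ * W * S j))
    (q : Fin m → ℝ) (hq1 : ∑ j, q j = 1)
    (Pr H : Fin m → Matrix (Fin n) (Fin n) ℝ)
    (hPr : ∀ j, Pr j = S j * ((S j)ᵀ * W * S j)⁻¹ * (S j)ᵀ * W)
    (hH : ∀ j, H j = S j * ((S j)ᵀ * W * S j)⁻¹ * (S j)ᵀ)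
    (Hbar : Matrix (Fin n) (Fin n) ℝ) (hHbar : Hbar = ∑ j, q j • H j)
    (κ : ℝ) (hκ : κ = lammin (Wh * Hbar * Wh)) :
    (∀ (M N : Matrix (Fin d) (Fin n) ℝ) (j : Fin m),
        wnorm2 W (M * (1 - Pr j) + N * Pr j)
          = wnorm2 W (M * (1 - Pr j)) + wnorm2 W (N * Pr j) ∧
        wnorm2 W (N * Pr j) = Matrix.trace (N * H j * Nᵀ)) ∧
    (∀ M N : Matrix (Fin d) (Fin n) ℝ,
        ∑ j, q j * wnorm2 W (M * (1 - Pr j) + N * Pr j)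
          ≤ (1 - κ) * wnorm2 W M + Matrix.trace (N * Hbar * Nᵀ)) := by
  have hWs : W.IsSymm := isHermitian_iff_isSymm.mp hW.isHermitian
  have hHs : ∀ j, (H j).IsSymm := fun j => hH j ▸ isSymm_mul_inv_mul_transpose hWs (S j)
  have hHWH : ∀ j, H j * W * H j = H j := fun j =>
    hH j ▸ mul_inv_mul_transpose_mul_mul_self (hS j)
  have hPrH : ∀ j, Pr j = H j * W := fun j => by rw [hPr, hH]
  refine ⟨fun M N j => ?_, fun M N => ?_⟩
  · rw [hPrH]
    exact ⟨wnorm2_complement_add_projection hWs hW.isUnit (hHs j) (hHWH j) M N,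
      wnorm2_mul_projection hWs hW.isUnit (hHs j) (hHWH j) N⟩
  have hstep : ∀ j, wnorm2 W (M * (1 - Pr j) + N * Pr j)
      = wnorm2 W M - trace (M * H j * Mᵀ) + trace (N * H j * Nᵀ) := fun j => by
    rw [hPrH, wnorm2_complement_add_projection_eq hWs hW.isUnit (hHs j) (hHWH j)]
  have hHbars : Hbar.IsSymm := by
    rw [hHbar, IsSymm, transpose_sum]
    exact Finset.sum_congr rfl fun j _ => ((hHs j).smul (q j)).eq
  have hκM := hκ ▸ lammin_mul_wnorm2_le hWh hWh2 hHbars M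
  calc ∑ j, q j * wnorm2 W (M * (1 - Pr j) + N * Pr j)
      = wnorm2 W M - trace (M * Hbar * Mᵀ) + trace (N * Hbar * Nᵀ) := by
        simp only [hstep, hHbar, trace_mul_sum_smul_mul_transpose, mul_add, mul_sub,
          Finset.sum_add_distrib, Finset.sum_sub_distrib, ← Finset.sum_mul, hq1, one_mul]
    _ ≤ (1 - κ) * wnorm2 W M + trace (N * Hbar * Nᵀ) := by linarith

/-- (a) Orthogonality identities for a single sketch, and (b) the expected-contraction
inequality for a finitely supported sketch distribution, with κ the stochastic
condition number. -/
theorem projection_norm_identities_and_contraction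
    {d n m : ℕ}
    (W Wh : Matrix (Fin n) (Fin n) ℝ) (hW : W.PosDef)
    (hWh : Wh.PosDef) (hWh2 : Wh * Wh = W)
    (τs : Fin m → ℕ) (S : ∀ j, Matrix (Fin n) (Fin (τs j)) ℝ)
    (hS : ∀ j, IsUnit ((S j)ᵀ * W * S j))
    (q : Fin m → ℝ) (hq : ∀ j, 0 ≤ q j) (hq1 : ∑ j, q j = 1)
    (Pr H : Fin m → Matrix (Fin n) (Fin n) ℝ)
    (hPr : ∀ j, Pr j = S j * ((S j)ᵀ * W * S j)⁻¹ * (S j)ᵀ * W)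
    (hH : ∀ j, H j = S j * ((S j)ᵀ * W * S j)⁻¹ * (S j)ᵀ)
    (Hbar : Matrix (Fin n) (Fin n) ℝ) (hHbar : Hbar = ∑ j, q j • H j)
    (κ : ℝ) (hκ : κ = lammin (Wh * Hbar * Wh)) :
    (∀ (M N : Matrix (Fin d) (Fin n) ℝ) (j : Fin m),
        wnorm2 W (M * (1 - Pr j) + N * Pr j)
          = wnorm2 W (M * (1 - Pr j)) + wnorm2 W (N * Pr j) ∧
        wnorm2 W (N * Pr j) = Matrix.trace (N * H j * Nᵀ)) ∧
    (∀ M N : Matrix (Fin d) (Fin n) ℝ,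
        ∑ j, q j * wnorm2 W (M * (1 - Pr j) + N * Pr j)
          ≤ (1 - κ) * wnorm2 W M + Matrix.trace (N * Hbar * Nᵀ)) :=
  projection_norm_identities_and_contraction_general W Wh hW hWh hWh2 τs S hS q hq1 Pr H hPr hH Hbar
    hHbar κ hκ
end

section
/- Let W ∈ ℝ^{n×n} be symmetric positive definite, (S_j, q_j)_{j=1}^m a finitely supported sketch distribution with constants θ_j > 0 satisfying the unbiasedness condition ∑_j q_j θ_j Π_{S_j} e = e. Let f_1,…,f_n : ℝ^d → ℝ be differentiable with f := (1/n)∑_i f_i, and let x* ∈ ℝ^d satisfy ∑_i ∇f_i(x*) = 0. Assume the expected smoothness of the stochastic gradient: there is L₁ > 0 such that ∑_j q_j (θ_j/n)² ‖(∇F(x) − ∇F(x*)) Π_{S_j} e‖² ≤ 2L₁ (f(x) − f(x*)) for all x. Let ρ := λmax(W^{1/2}(∑_j q_j θ_j² Π_{S_j} e eᵀ Π_{S_j}ᵀ − e eᵀ)W^{1/2}). Then for every x ∈ ℝ^d and J ∈ ℝ^{d×n}, the gradient estimates g_j := (1/n)Je + (θ_j/n)(∇F(x) − J)Π_{S_j}e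 satisfy ∑_j q_j ‖g_j‖² ≤ 4L₁ (f(x) − f(x*)) + (2ρ/n²)‖J − ∇F(x*)‖²_{W⁻¹}. -/
open Matrix

/-- Largest eigenvalue of a (symmetric) real matrix, as the supremum of its real spectrum. -/
noncomputable def lammax {n : ℕ} (M : Matrix (Fin n) (Fin n) ℝ) : ℝ :=
  sSup (spectrum ℝ M)

/-- The (Euclidean) gradient of `f : ℝ^d → ℝ` at `x`. -/
noncomputable def grad {d : ℕ} (f : (Fin d → ℝ) → ℝ) (x : Fin d → ℝ) : Fin d → ℝ :=
  fun k => fderiv ℝ f x (Pi.single k 1)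

/-- The Jacobian `∇F(x) = [∇f₁(x), …, ∇fₙ(x)] ∈ ℝ^{d×n}`. -/
noncomputable def jac {d n : ℕ} (f : Fin n → (Fin d → ℝ) → ℝ) (x : Fin d → ℝ) :
    Matrix (Fin d) (Fin n) ℝ :=
  Matrix.of fun k i => grad (f i) x k

/-- Squared Euclidean norm. -/
def sq2 {d : ℕ} (v : Fin d → ℝ) : ℝ := ∑ k, (v k) ^ 2

/-- The all-ones vector `e ∈ ℝⁿ`. -/
def onesV (n : ℕ) : Fin n → ℝ := fun _ => 1

/-!
Since `∇F(x*) e = 0`, each estimate splits as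
`g_j = (θ_j/n)(∇F(x) − ∇F(x*)) Π_j e + (1/n) R (e − θ_j Π_j e)` with `R = J − ∇F(x*)`, and
`‖a + b‖² ≤ 2‖a‖² + 2‖b‖²`. The first part is bounded by expected smoothness. The second moment
of the second part is `Tr(R M Rᵀ)/n²` with `M = ∑ q_j (e − θ_j Π_j e)(e − θ_j Π_j e)ᵀ`, and
unbiasedness turns `M` into `∑ q_j θ_j² Π_j e eᵀ Π_jᵀ − e eᵀ`. Writing
`R M Rᵀ = (R W^{-1/2}) (W^{1/2} M W^{1/2}) (R W^{-1/2})ᵀ`, the trace is at most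
`ρ Tr(R W⁻¹ Rᵀ)` because `ρ • 1 − W^{1/2} M W^{1/2}` is positive semidefinite.
-/

lemma sq2_eq_dotProduct {d : ℕ} (v : Fin d → ℝ) : sq2 v = v ⬝ᵥ v := by
  simp [sq2, dotProduct, sq]

lemma sq2_smul {d : ℕ} (c : ℝ) (v : Fin d → ℝ) : sq2 (c • v) = c ^ 2 * sq2 v := by
  simp [sq2, Finset.mul_sum, mul_pow]

lemma sq2_add_le {d : ℕ} (u v : Fin d → ℝ) : sq2 (u + v) ≤ 2 * sq2 u + 2 * sq2 v := by
  simp only [sq2, Pi.add_apply, Finset.mul_sum, ← Finset.sum_add_distrib]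
  gcongr with k
  nlinarith [sq_nonneg (u k - v k)]

lemma sum_mul_sq2_add_le {ι : Type*} [Fintype ι] {d : ℕ} {q : ι → ℝ} (hq : ∀ j, 0 ≤ q j)
    (a b : ι → Fin d → ℝ) :
    ∑ j, q j * sq2 (a j + b j) ≤ 2 * ∑ j, q j * sq2 (a j) + 2 * ∑ j, q j * sq2 (b j) := by
  simp only [Finset.mul_sum, ← Finset.sum_add_distrib]
  gcongr with j
  nlinarith [hq j, sq2_add_le (a j) (b j)]

lemma sum_mul_sq2_mulVec {ι κ : Type*} [Fintype ι] [Fintype κ] {d : ℕ} (q : ι → ℝ)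
    (R : Matrix (Fin d) κ ℝ) (u : ι → κ → ℝ) :
    ∑ j, q j * sq2 (R *ᵥ u j) = trace (R * (∑ j, q j • vecMulVec (u j) (u j)) * Rᵀ) := by
  simp only [Matrix.mul_sum, Matrix.sum_mul, trace_sum, Matrix.mul_smul, Matrix.smul_mul,
    trace_smul, mul_vecMulVec, vecMulVec_mul, vecMul_transpose, trace_vecMulVec,
    sq2_eq_dotProduct, smul_eq_mul]

lemma sum_smul_vecMulVec_sub_smul {ι κ R : Type*} [Fintype ι] [CommRing R]
    {q θ : ι → R} {v : ι → κ → R} {e : κ → R} (hq : ∑ j, q j = 1)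
    (hunbiased : ∑ j, (q j * θ j) • v j = e) :
    ∑ j, q j • vecMulVec (e - θ j • v j) (e - θ j • v j)
      = ∑ j, (q j * θ j ^ 2) • vecMulVec (v j) (v j) - vecMulVec e e := by
  ext a b
  have hcoord : ∀ a, ∑ j, q j * θ j * v j a = e a := fun a => by
    simpa using congrFun hunbiased a
  simp only [Matrix.sum_apply, Matrix.sub_apply, Matrix.smul_apply, vecMulVec_apply,
    Pi.sub_apply, Pi.smul_apply, smul_eq_mul]
  calc ∑ j, q j * ((e a - θ j * v j a) * (e b - θ j * v j b))
      = (∑ j, q j) * (e a * e b) - (∑ j, q j * θ j * v j a) * e b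
          - e a * ∑ j, q j * θ j * v j b + ∑ j, q j * θ j ^ 2 * (v j a * v j b) := by
        simp only [Finset.sum_mul, Finset.mul_sum, ← Finset.sum_sub_distrib,
          ← Finset.sum_add_distrib]
        exact Finset.sum_congr rfl fun j _ => by ring
    _ = _ := by rw [hq, hcoord, hcoord]; ring

open scoped MatrixOrder in
theorem Matrix.IsHermitian.trace_mul_mul_transpose_le {ι κ : Type*} [Fintype ι] [DecidableEq ι]
    [Fintype κ] {A : Matrix ι ι ℝ} (hA : A.IsHermitian) (Y : Matrix κ ι ℝ) :
    trace (Y * A * Yᵀ) ≤ sSup (spectrum ℝ A) * trace (Y * Yᵀ) := by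
  have hle : A ≤ algebraMap ℝ _ (sSup (spectrum ℝ A)) :=
    le_algebraMap_of_spectrum_le (fun x hx => le_csSup (finite_spectrum A).bddAbove hx)
      hA.isSelfAdjoint
  have := ((Matrix.le_iff.mp hle).mul_mul_conjTranspose_same Y).trace_nonneg
  simpa [Matrix.sub_mul, Matrix.mul_sub, Matrix.trace_sub, Algebra.algebraMap_eq_smul_one,
    sub_nonneg] using this

lemma trace_mul_mul_transpose_le_lammax_mul_wnorm2 {d n : ℕ} {W Wh M : Matrix (Fin n) (Fin n) ℝ}
    (hWh : Wh.PosDef) (hWh2 : Wh * Wh = W) (hM : Mᵀ = M) (R : Matrix (Fin d) (Fin n) ℝ) :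
    trace (R * M * Rᵀ) ≤ lammax (Wh * M * Wh) * wnorm2 W R := by
  have hWhT : Whᵀ = Wh := hWh.isHermitian
  have hdet : IsUnit Wh.det := (isUnit_iff_isUnit_det _).mp hWh.isUnit
  have hA : (Wh * M * Wh).IsHermitian := by
    simp [IsHermitian, conjTranspose_eq_transpose_of_trivial, hWhT, hM, Matrix.mul_assoc]
  have hY : R * Wh⁻¹ * (R * Wh⁻¹)ᵀ = R * W⁻¹ * Rᵀ := by
    rw [transpose_mul, transpose_nonsing_inv, hWhT, ← hWh2, Matrix.mul_inv_rev]
    simp only [Matrix.mul_assoc]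
  have hRMR : R * M * Rᵀ = R * Wh⁻¹ * (Wh * M * Wh) * (R * Wh⁻¹)ᵀ := by
    rw [transpose_mul, transpose_nonsing_inv, hWhT]
    simp only [Matrix.mul_assoc, nonsing_inv_mul_cancel_left _ _ hdet,
      mul_nonsing_inv_cancel_left _ _ hdet]
  rw [hRMR, wnorm2, ← hY]
  exact hA.trace_mul_mul_transpose_le _

lemma smul_mulVec_add_smul_mulVec_eq {𝕜 : Type*} [Field 𝕜] {l k : Type*} [Fintype k]
    (G G₀ J : Matrix l k 𝕜) (P : Matrix k k 𝕜) {e : k → 𝕜} (hG₀ : G₀ *ᵥ e = 0) (c θ : 𝕜) :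
    (1 / c) • J *ᵥ e + (θ / c) • ((G - J) * P) *ᵥ e
      = (θ / c) • ((G - G₀) * P) *ᵥ e + (1 / c) • ((J - G₀) *ᵥ (e - θ • P *ᵥ e)) := by
  simp only [sub_mulVec, mulVec_sub, ← mulVec_mulVec, mulVec_smul, hG₀]
  module

lemma jac_mulVec_onesV {d n : ℕ} (f : Fin n → (Fin d → ℝ) → ℝ) (x : Fin d → ℝ) :
    jac f x *ᵥ onesV n = ∑ i, grad (f i) x := by
  ext k
  simp [jac, mulVec, dotProduct, onesV, Finset.sum_apply]

theorem gradient_estimate_second_moment_bound_general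
    {d n m : ℕ}
    (W Wh : Matrix (Fin n) (Fin n) ℝ)
    (hWh : Wh.PosDef) (hWh2 : Wh * Wh = W)
    (q : Fin m → ℝ) (hq : ∀ j, 0 ≤ q j) (hq1 : ∑ j, q j = 1)
    (Pr : Fin m → Matrix (Fin n) (Fin n) ℝ)
    (θ : Fin m → ℝ)
    (hunbiased : ∑ j, (q j * θ j) • (Pr j).mulVec (onesV n) = onesV n)
    (f : Fin n → (Fin d → ℝ) → ℝ)
    (fbar : (Fin d → ℝ) → ℝ)
    (xs : Fin d → ℝ) (hcrit : ∑ i, grad (f i) xs = 0)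
    (L₁ : ℝ)
    (hES1 : ∀ x : Fin d → ℝ,
      ∑ j, q j * ((θ j / n) ^ 2 * sq2 (((jac f x - jac f xs) * Pr j).mulVec (onesV n)))
        ≤ 2 * L₁ * (fbar x - fbar xs))
    (ρ : ℝ)
    (hρ : ρ = lammax (Wh *
        ((∑ j, (q j * θ j ^ 2) •
            vecMulVec ((Pr j).mulVec (onesV n)) ((Pr j).mulVec (onesV n)))
          - vecMulVec (onesV n) (onesV n)) * Wh)) :
    ∀ (x : Fin d → ℝ) (J : Matrix (Fin d) (Fin n) ℝ),
      ∑ j, q j *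
          sq2 ((1 / (n : ℝ)) • J.mulVec (onesV n)
            + (θ j / n) • ((jac f x - J) * Pr j).mulVec (onesV n))
        ≤ 4 * L₁ * (fbar x - fbar xs) + (2 * ρ / (n : ℝ) ^ 2) * wnorm2 W (J - jac f xs) := by
  intro x J
  set e := onesV n
  set u : Fin m → Fin n → ℝ := fun j => e - θ j • Pr j *ᵥ e
  set M := ∑ j, q j • vecMulVec (u j) (u j)
  set D := jac f x - jac f xs
  set R := J - jac f xs
  have hxs : jac f xs *ᵥ e = 0 := by rw [jac_mulVec_onesV, hcrit]
  have hMT : Mᵀ = M := by simp [M, transpose_sum]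
  rw [hρ, ← sum_smul_vecMulVec_sub_smul hq1 hunbiased]
  calc _ = ∑ j, q j * sq2 ((θ j / n) • (D * Pr j) *ᵥ e + (1 / (n : ℝ)) • (R *ᵥ u j)) := by
        simp only [smul_mulVec_add_smul_mulVec_eq _ _ _ _ hxs, u, D, R]
    _ ≤ 2 * ∑ j, q j * sq2 ((θ j / n) • (D * Pr j) *ᵥ e)
          + 2 * ∑ j, q j * sq2 ((1 / (n : ℝ)) • (R *ᵥ u j)) :=
        sum_mul_sq2_add_le hq _ _
    _ = 2 * ∑ j, q j * ((θ j / n) ^ 2 * sq2 ((D * Pr j) *ᵥ e))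
          + 2 * ((1 / (n : ℝ)) ^ 2 * trace (R * M * Rᵀ)) := by
        rw [← sum_mul_sq2_mulVec, Finset.mul_sum _ _ ((1 / (n : ℝ)) ^ 2)]
        simp only [sq2_smul, mul_left_comm (q _) ((1 / (n : ℝ)) ^ 2)]
    _ ≤ 2 * (2 * L₁ * (fbar x - fbar xs))
          + 2 * ((1 / (n : ℝ)) ^ 2 * (lammax (Wh * M * Wh) * wnorm2 W R)) := by
        gcongr
        · exact hES1 x
        · exact trace_mul_mul_transpose_le_lammax_mul_wnorm2 hWh hWh2 hMT R
    _ = _ := by ring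

/-- Second moment bound for the JacSketch gradient estimate:
`E‖gᵏ‖² ≤ 4L₁(f(x) − f(x*)) + (2ρ/n²)‖J − ∇F(x*)‖²_{W⁻¹}`. -/
theorem gradient_estimate_second_moment_bound
    {d n m : ℕ}
    (W Wh : Matrix (Fin n) (Fin n) ℝ) (hW : W.PosDef)
    (hWh : Wh.PosDef) (hWh2 : Wh * Wh = W)
    (τs : Fin m → ℕ) (S : ∀ j, Matrix (Fin n) (Fin (τs j)) ℝ)
    (hS : ∀ j, IsUnit ((S j)ᵀ * W * S j))
    (q : Fin m → ℝ) (hq : ∀ j, 0 ≤ q j) (hq1 : ∑ j, q j = 1)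
    (Pr : Fin m → Matrix (Fin n) (Fin n) ℝ)
    (hPr : ∀ j, Pr j = S j * ((S j)ᵀ * W * S j)⁻¹ * (S j)ᵀ * W)
    (θ : Fin m → ℝ) (hθ : ∀ j, 0 < θ j)
    (hunbiased : ∑ j, (q j * θ j) • (Pr j).mulVec (onesV n) = onesV n)
    (f : Fin n → (Fin d → ℝ) → ℝ) (hdiff : ∀ i, Differentiable ℝ (f i))
    (fbar : (Fin d → ℝ) → ℝ) (hfbar : ∀ x, fbar x = (1 / (n : ℝ)) * ∑ i, f i x)
    (xs : Fin d → ℝ) (hcrit : ∑ i, grad (f i) xs = 0)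
    (L₁ : ℝ) (hL₁pos : 0 < L₁)
    (hES1 : ∀ x : Fin d → ℝ,
      ∑ j, q j * ((θ j / n) ^ 2 * sq2 (((jac f x - jac f xs) * Pr j).mulVec (onesV n)))
        ≤ 2 * L₁ * (fbar x - fbar xs))
    (ρ : ℝ)
    (hρ : ρ = lammax (Wh *
        ((∑ j, (q j * θ j ^ 2) •
            vecMulVec ((Pr j).mulVec (onesV n)) ((Pr j).mulVec (onesV n)))
          - vecMulVec (onesV n) (onesV n)) * Wh)) :
    ∀ (x : Fin d → ℝ) (J : Matrix (Fin d) (Fin n) ℝ),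
      ∑ j, q j *
          sq2 ((1 / (n : ℝ)) • J.mulVec (onesV n)
            + (θ j / n) • ((jac f x - J) * Pr j).mulVec (onesV n))
        ≤ 4 * L₁ * (fbar x - fbar xs) + (2 * ρ / (n : ℝ) ^ 2) * wnorm2 W (J - jac f xs) :=
  gradient_estimate_second_moment_bound_general W Wh hWh hWh2 q hq hq1 Pr θ hunbiased f fbar xs
    hcrit L₁ hES1 ρ hρ
end

section
/- Expected smoothness of the Jacobian for minibatch sketches. Let f_1,…,f_n : ℝ^d → ℝ be differentiable, f := (1/n)∑_i f_i, and let x* ∈ ℝ^d satisfy ∑_i ∇f_i(x*) = 0. Let G be a finite collection of nonempty subsets of [n] and p_C > 0 for C ∈ G with ∑_{C∈G} p_C = 1, and set p_i := ∑_{C∈G : i∈C} p_C. Let w_i > 0 and L_i > 0 for each i, and assume for every i and every x: ‖∇f_i(x) − ∇f_i(x*)‖² ≤ 2L_i (f_i(x) − f_i(x*) − ⟨∇f_i(x*), x − x*⟩). Then for all x ∈ ℝ^d: ∑_{C∈G} p_C ∑_{i∈C} (1/w_i) ‖∇f_i(x) − ∇f_i(x*)‖² ≤ 2L₂ (f(x)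 − f(x*)), where L₂ := n · max_{i∈[n]} (p_i L_i / w_i). (The left-hand side equals the expected weighted Frobenius norm E‖(∇F(x) − ∇F(x*)) Π_{I_S}‖²_{W⁻¹} for the minibatch sketch with W = diag(w_1,…,w_n).) -/
def inner2 {d : ℕ} (v w : Fin d → ℝ) : ℝ := ∑ k, v k * w k

open Finset

theorem sq2_nonneg {d : ℕ} (v : Fin d → ℝ) : 0 ≤ sq2 v :=
  sum_nonneg fun k _ => sq_nonneg (v k)

theorem sum_inner2 {ι : Type*} {d : ℕ} (s : Finset ι) (v : ι → Fin d → ℝ)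
    (y : Fin d → ℝ) :
    ∑ i ∈ s, inner2 (v i) y = inner2 (∑ i ∈ s, v i) y :=
  (sum_dotProduct s v y).symm

noncomputable def bregman {d : ℕ} (f : (Fin d → ℝ) → ℝ) (xs x : Fin d → ℝ) : ℝ :=
  f x - f xs - inner2 (grad f xs) (x - xs)

theorem sum_bregman_of_sum_grad_eq_zero {ι : Type*} {d : ℕ} (s : Finset ι)
    (f : ι → (Fin d → ℝ) → ℝ) {xs : Fin d → ℝ} (hcrit : ∑ i ∈ s, grad (f i) xs = 0)
    (x : Fin d → ℝ) :
    ∑ i ∈ s, bregman (f i) xs x = ∑ i ∈ s, f i x - ∑ i ∈ s, f i xs := by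
  simp only [bregman, sum_sub_distrib, sum_inner2, hcrit]
  simp [inner2]

theorem sum_mul_sum_eq_sum_mul {ι R : Type*} [Fintype ι] [DecidableEq ι] [CommSemiring R]
    (G : Finset (Finset ι)) (p : Finset ι → R) (g : ι → R) :
    ∑ C ∈ G, p C * ∑ i ∈ C, g i = ∑ i, (∑ C ∈ G with i ∈ C, p C) * g i := by
  simp only [mul_sum, sum_mul, sum_filter]
  rw [sum_comm]
  refine sum_congr rfl fun C _ => ?_
  simp only [ite_mul, zero_mul]
  rw [sum_ite_mem, univ_inter]

theorem sum_eq_mul_of_eq_one_div_mul_sum {n : ℕ} (g : Fin n → ℝ) {a : ℝ}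
    (ha : a = 1 / (n : ℝ) * ∑ i, g i) : ∑ i, g i = n * a := by
  subst ha
  rcases n with _ | n
  · simp
  · field_simp

theorem mul_one_div_mul_le_of_le_two_mul {q w L M s D : ℝ} (hq : 0 ≤ q) (hw : 0 < w)
    (hL : 0 < L) (hs0 : 0 ≤ s) (hs : s ≤ 2 * L * D) (hM : q * L / w ≤ M) :
    q * (1 / w * s) ≤ 2 * M * D := by
  have hD : 0 ≤ D := by nlinarith
  calc q * (1 / w * s) ≤ q * (1 / w * (2 * L * D)) := by gcongr
    _ = 2 * (q * L / w) * D := by ring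
    _ ≤ 2 * M * D := by gcongr

theorem expected_smoothness_jacobian_minibatch_general
    {d n : ℕ}
    (f : Fin n → (Fin d → ℝ) → ℝ)
    (fbar : (Fin d → ℝ) → ℝ) (hfbar : ∀ x, fbar x = (1 / (n : ℝ)) * ∑ i, f i x)
    (xs : Fin d → ℝ) (hcrit : ∑ i, grad (f i) xs = 0)
    (G : Finset (Finset (Fin n)))
    (p : Finset (Fin n) → ℝ) (hp : ∀ C ∈ G, 0 < p C)
    (w L : Fin n → ℝ) (hw : ∀ i, 0 < w i) (hL : ∀ i, 0 < L i)
    (hsm : ∀ (i : Fin n) (x : Fin d → ℝ),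
      sq2 (grad (f i) x - grad (f i) xs)
        ≤ 2 * L i * (f i x - f i xs - inner2 (grad (f i) xs) (x - xs)))
    (L₂ : ℝ)
    (hL₂ : L₂ = (n : ℝ) *
        (⨆ i : Fin n, (∑ C ∈ G.filter (fun C => i ∈ C), p C) * L i / w i)) :
    ∀ x : Fin d → ℝ,
      ∑ C ∈ G, p C * ∑ i ∈ C, (1 / w i) * sq2 (grad (f i) x - grad (f i) xs)
        ≤ 2 * L₂ * (fbar x - fbar xs) := by
  intro x
  have hq (i : Fin n) : 0 ≤ ∑ C ∈ G with i ∈ C, p C :=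
    sum_nonneg fun C hC => (hp C (mem_filter.mp hC).1).le
  set M := ⨆ i : Fin n, (∑ C ∈ G with i ∈ C, p C) * L i / w i
  have hM (i : Fin n) : (∑ C ∈ G with i ∈ C, p C) * L i / w i ≤ M :=
    le_ciSup (f := fun j => (∑ C ∈ G with j ∈ C, p C) * L j / w j)
      (Finite.bddAbove_range _) i
  calc ∑ C ∈ G, p C * ∑ i ∈ C, (1 / w i) * sq2 (grad (f i) x - grad (f i) xs)
      = ∑ i, (∑ C ∈ G with i ∈ C, p C) * (1 / w i * sq2 (grad (f i) x - grad (f i) xs)) :=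
        sum_mul_sum_eq_sum_mul G p _
    _ ≤ ∑ i, 2 * M * bregman (f i) xs x := sum_le_sum fun i _ =>
        mul_one_div_mul_le_of_le_two_mul (hq i) (hw i) (hL i) (sq2_nonneg _) (hsm i x) (hM i)
    _ = 2 * L₂ * (fbar x - fbar xs) := by
        rw [← mul_sum, sum_bregman_of_sum_grad_eq_zero _ _ hcrit,
          sum_eq_mul_of_eq_one_div_mul_sum _ (hfbar x),
          sum_eq_mul_of_eq_one_div_mul_sum _ (hfbar xs), hL₂]
        ring

/-- Expected smoothness of the Jacobian for minibatch sketches with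
`W = diag(w₁,…,wₙ)`: `∑_{C∈G} p_C ∑_{i∈C} (1/wᵢ)‖∇fᵢ(x) − ∇fᵢ(x*)‖²
≤ 2L₂(f(x) − f(x*))` with `L₂ = n·maxᵢ (pᵢ Lᵢ / wᵢ)`. -/
theorem expected_smoothness_jacobian_minibatch
    {d n : ℕ} (hn : 0 < n)
    (f : Fin n → (Fin d → ℝ) → ℝ) (hdiff : ∀ i, Differentiable ℝ (f i))
    (fbar : (Fin d → ℝ) → ℝ) (hfbar : ∀ x, fbar x = (1 / (n : ℝ)) * ∑ i, f i x)
    (xs : Fin d → ℝ) (hcrit : ∑ i, grad (f i) xs = 0)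
    (G : Finset (Finset (Fin n))) (hGne : ∀ C ∈ G, C.Nonempty)
    (p : Finset (Fin n) → ℝ) (hp : ∀ C ∈ G, 0 < p C) (hp1 : ∑ C ∈ G, p C = 1)
    (w L : Fin n → ℝ) (hw : ∀ i, 0 < w i) (hL : ∀ i, 0 < L i)
    (hsm : ∀ (i : Fin n) (x : Fin d → ℝ),
      sq2 (grad (f i) x - grad (f i) xs)
        ≤ 2 * L i * (f i x - f i xs - inner2 (grad (f i) xs) (x - xs)))
    (L₂ : ℝ)
    (hL₂ : L₂ = (n : ℝ) *
        (⨆ i : Fin n, (∑ C ∈ G.filter (fun C => i ∈ C), p C) * L i / w i)) :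
    ∀ x : Fin d → ℝ,
      ∑ C ∈ G, p C * ∑ i ∈ C, (1 / w i) * sq2 (grad (f i) x - grad (f i) xs)
        ≤ 2 * L₂ * (fbar x - fbar xs) :=
  expected_smoothness_jacobian_minibatch_general f fbar hfbar xs hcrit G p hp w L hw hL hsm L₂ hL₂
end

section
/- Gradient estimate contraction for τ-partition samplings. Let G be a partition of [n] := {1,…,n} into sets each of cardinality τ ≥ 1, let p_C > 0 for C ∈ G with ∑_{C∈G} p_C = 1, and let σ_C ≥ 0 for C ∈ G. Let f_1,…,f_n : ℝ^d → ℝ be differentiable and fix x, x* ∈ ℝ^d and J ∈ ℝ^{d×n}. Define h_C(J) := (1/(n p_C)) ∑_{i∈C} (J_{:i} − ∇f_i(x*)), and for C' ∈ G let J'(C') ∈ ℝ^{d×n} have columns ∇f_i(x) for i ∈ C' and J_{:i} for i ∉ C'. Then ∑_{C'∈G} p_{C'} ∑_{C∈G} p_C σ_C ‖h_C(J'(C'))‖² ≤ ∑_{C∈G} p_C σ_C (1 − p_C) ‖h_C(J)‖² + ∑_{C∈G} p_C² σ_C ‖(1/(n p_C)) ∑_{i∈C} (∇f_i(x) − ∇f_i(x*))‖².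 -/
open Matrix

/-- Gradient estimate contraction for `τ`-partition samplings:
`E_{C'}[∑_C p_C σ_C ‖h_C(J'(C'))‖²] ≤ ∑_C p_C σ_C (1 − p_C)‖h_C(J)‖²
+ ∑_C p_C² σ_C ‖(1/(n p_C))∑_{i∈C}(∇fᵢ(x) − ∇fᵢ(x*))‖²`. -/
theorem gradient_estimate_contraction_partition
    {d n : ℕ} (τ : ℕ) (hτ : 1 ≤ τ)
    (G : Finset (Finset (Fin n)))
    (hcard : ∀ C ∈ G, C.card = τ)
    (hpart : ∀ i : Fin n, ∃! C, C ∈ G ∧ i ∈ C)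
    (p : Finset (Fin n) → ℝ) (hp : ∀ C ∈ G, 0 < p C) (hp1 : ∑ C ∈ G, p C = 1)
    (σ : Finset (Fin n) → ℝ) (hσ : ∀ C ∈ G, 0 ≤ σ C)
    (f : Fin n → (Fin d → ℝ) → ℝ) (hdiff : ∀ i, Differentiable ℝ (f i))
    (x xs : Fin d → ℝ) (J : Matrix (Fin d) (Fin n) ℝ)
    (h : Finset (Fin n) → Matrix (Fin d) (Fin n) ℝ → (Fin d → ℝ))
    (hh : ∀ (C : Finset (Fin n)) (K : Matrix (Fin d) (Fin n) ℝ),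
      h C K = (1 / ((n : ℝ) * p C)) • ∑ i ∈ C, ((fun k => K k i) - grad (f i) xs))
    (J' : Finset (Fin n) → Matrix (Fin d) (Fin n) ℝ)
    (hJ' : ∀ C' : Finset (Fin n),
      J' C' = Matrix.of fun k i => if i ∈ C' then grad (f i) x k else J k i) :
    ∑ C' ∈ G, p C' * ∑ C ∈ G, p C * σ C * sq2 (h C (J' C'))
      ≤ ∑ C ∈ G, p C * σ C * (1 - p C) * sq2 (h C J)
        + ∑ C ∈ G, (p C) ^ 2 * σ C *
            sq2 ((1 / ((n : ℝ) * p C)) • ∑ i ∈ C, (grad (f i) x - grad (f i) xs)) := by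
  set g : Finset (Fin n) → (Fin d → ℝ) :=
    fun C => (1 / ((n : ℝ) * p C)) • ∑ i ∈ C, (grad (f i) x - grad (f i) xs) with hg
  have hdisj : ∀ C ∈ G, ∀ C' ∈ G, C ≠ C' → ∀ i ∈ C, i ∉ C' := by
    intro C hC C' hC' hne i hi hi'
    obtain ⟨D, _, hun⟩ := hpart i
    exact hne ((hun C ⟨hC, hi⟩).trans (hun C' ⟨hC', hi'⟩).symm)
  have hhe : ∀ C ∈ G, ∀ C' ∈ G, C ≠ C' → h C (J' C') = h C J := by
    intro C hC C' hC' hne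
    rw [hh, hh]
    congr 1
    apply Finset.sum_congr rfl
    intro i hi
    have hni : i ∉ C' := hdisj C hC C' hC' hne i hi
    rw [hJ']
    simp [hni]
  have hhg : ∀ C ∈ G, h C (J' C) = g C := by
    intro C _
    rw [hh, hJ', hg]
    congr 1
    apply Finset.sum_congr rfl
    intro i hi
    funext k
    simp [hi]
  set S : ℝ := ∑ C ∈ G, p C * σ C * sq2 (h C J) with hS
  have key : ∀ C' ∈ G,
      ∑ C ∈ G, p C * σ C * sq2 (h C (J' C'))
        = S + p C' * σ C' * (sq2 (g C') - sq2 (h C' J)) := by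
    intro C' hC'
    have step : ∑ C ∈ G, p C * σ C * sq2 (h C (J' C'))
        = ∑ C ∈ G, (p C * σ C * sq2 (h C J)
            + (if C = C' then p C * σ C * (sq2 (g C) - sq2 (h C J)) else 0)) := by
      apply Finset.sum_congr rfl
      intro C hC
      by_cases hEq : C = C'
      · subst hEq
        rw [hhg C hC]
        simp
        ring
      · rw [hhe C hC C' hC' hEq]
        simp [hEq]
    rw [step, Finset.sum_add_distrib, Finset.sum_ite_eq' G C'
      (fun C => p C * σ C * (sq2 (g C) - sq2 (h C J))), if_pos hC']
  have lhs_eq : ∑ C' ∈ G, p C' * ∑ C ∈ G, p C * σ C * sq2 (h C (J' C'))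
      = S + ∑ C ∈ G, p C ^ 2 * σ C * (sq2 (g C) - sq2 (h C J)) := by
    have step : ∀ C' ∈ G, p C' * ∑ C ∈ G, p C * σ C * sq2 (h C (J' C'))
        = p C' * S + p C' ^ 2 * σ C' * (sq2 (g C') - sq2 (h C' J)) := by
      intro C' hC'
      rw [key C' hC']
      ring
    rw [Finset.sum_congr rfl step, Finset.sum_add_distrib, ← Finset.sum_mul, hp1, one_mul]
  apply le_of_eq
  rw [lhs_eq, hS, ← Finset.sum_add_distrib, ← Finset.sum_add_distrib]
  exact Finset.sum_congr rfl fun C _ => by ring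
end

section
/- Second moment bound for the gradient estimate under τ-partition samplings. Let G be a partition of [n] := {1,…,n} into sets each of cardinality τ ≥ 1 and let p_C > 0 for C ∈ G with ∑_{C∈G} p_C = 1. Let f_1,…,f_n : ℝ^d → ℝ be differentiable and let x* ∈ ℝ^d satisfy ∑_{i=1}^n ∇f_i(x*) = 0. For x ∈ ℝ^d and J ∈ ℝ^{d×n} define g_C(x, J) := (1/n)∑_{i=1}^n J_{:i} + (1/(n p_C)) ∑_{i∈C} (∇f_i(x) − J_{:i}) and h_C(J) := (1/(n p_C)) ∑_{i∈C} (J_{:i} − ∇f_i(x*)). Then ∑_{C∈G} p_C ‖g_C(x, J)‖² ≤ 2 ∑_{C∈G} p_C ‖(1/(n p_C)) ∑_{i∈C} (∇f_i(x) − ∇f_i(x*))‖² + 2 ∑_{C∈G} p_C ‖h_C(J)‖². -/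
open Matrix

/-- Second moment bound for the gradient estimate under `τ`-partition samplings:
`E‖g_S(x,J)‖² ≤ 2E‖(1/(np_S))∑_{i∈S}(∇fᵢ(x) − ∇fᵢ(x*))‖² + 2E‖h_S(J)‖²`. -/
theorem gradient_estimate_second_moment_partition
    {d n : ℕ} (τ : ℕ) (hτ : 1 ≤ τ)
    (G : Finset (Finset (Fin n)))
    (hcard : ∀ C ∈ G, C.card = τ)
    (hpart : ∀ i : Fin n, ∃! C, C ∈ G ∧ i ∈ C)
    (p : Finset (Fin n) → ℝ) (hp : ∀ C ∈ G, 0 < p C) (hp1 : ∑ C ∈ G, p C = 1)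
    (f : Fin n → (Fin d → ℝ) → ℝ) (hdiff : ∀ i, Differentiable ℝ (f i))
    (xs : Fin d → ℝ) (hcrit : ∑ i, grad (f i) xs = 0)
    (g : Finset (Fin n) → (Fin d → ℝ) → Matrix (Fin d) (Fin n) ℝ → (Fin d → ℝ))
    (hg : ∀ (C : Finset (Fin n)) (x : Fin d → ℝ) (J : Matrix (Fin d) (Fin n) ℝ),
      g C x J = (1 / (n : ℝ)) • (∑ i : Fin n, (fun k => J k i))
        + (1 / ((n : ℝ) * p C)) • ∑ i ∈ C, (grad (f i) x - (fun k => J k i)))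
    (h : Finset (Fin n) → Matrix (Fin d) (Fin n) ℝ → (Fin d → ℝ))
    (hh : ∀ (C : Finset (Fin n)) (J : Matrix (Fin d) (Fin n) ℝ),
      h C J = (1 / ((n : ℝ) * p C)) • ∑ i ∈ C, ((fun k => J k i) - grad (f i) xs)) :
    ∀ (x : Fin d → ℝ) (J : Matrix (Fin d) (Fin n) ℝ),
      ∑ C ∈ G, p C * sq2 (g C x J)
        ≤ 2 * ∑ C ∈ G, p C *
              sq2 ((1 / ((n : ℝ) * p C)) • ∑ i ∈ C, (grad (f i) x - grad (f i) xs))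
          + 2 * ∑ C ∈ G, p C * sq2 (h C J) := by
  intro x J
  -- G is nonempty, hence n > 0
  have hGne : G.Nonempty := by
    by_contra hG
    rw [Finset.not_nonempty_iff_eq_empty] at hG
    simp [hG] at hp1
  obtain ⟨C0, hC0⟩ := hGne
  have hC0ne : C0.Nonempty := Finset.card_pos.mp (by rw [hcard C0 hC0]; omega)
  obtain ⟨i0, _⟩ := hC0ne
  have hn : (n : ℝ) ≠ 0 := Nat.cast_ne_zero.mpr i0.pos.ne'
  -- partition facts
  have hdisj : (G : Set (Finset (Fin n))).PairwiseDisjoint id := by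
    intro C hC D hD hne
    simp only [Function.onFun, id]
    rw [Finset.disjoint_left]
    intro a haC haD
    obtain ⟨E, _, huniq⟩ := hpart a
    exact hne ((huniq C ⟨hC, haC⟩).trans (huniq D ⟨hD, haD⟩).symm)
  have hbiUnion : G.biUnion id = Finset.univ := by
    ext a
    simp only [Finset.mem_biUnion, id, Finset.mem_univ, iff_true]
    obtain ⟨C, ⟨hC, haC⟩, _⟩ := hpart a
    exact ⟨C, hC, haC⟩
  have hsum_part : ∀ F : Fin n → ℝ, ∑ C ∈ G, ∑ i ∈ C, F i = ∑ i, F i := by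
    intro F
    calc ∑ C ∈ G, ∑ i ∈ C, F i = ∑ i ∈ G.biUnion id, F i := (Finset.sum_biUnion hdisj).symm
      _ = ∑ i, F i := by rw [hbiUnion]
  set A : Finset (Fin n) → (Fin d → ℝ) :=
    fun C => (1 / ((n : ℝ) * p C)) • ∑ i ∈ C, (grad (f i) x - grad (f i) xs) with hA
  set m : Fin d → ℝ := (1 / (n : ℝ)) • (∑ i : Fin n, (fun k => J k i)) with hm
  -- key averaging identity
  have hkey : ∀ k, ∑ C ∈ G, p C * h C J k = m k := by
    intro k
    have hcritk : ∑ i, grad (f i) xs k = 0 := by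
      have := congrFun hcrit k
      simpa [Finset.sum_apply] using this
    have e1 : ∀ C ∈ G, p C * h C J k
        = (1 / (n : ℝ)) * ∑ i ∈ C, (J k i - grad (f i) xs k) := by
      intro C hC
      rw [hh]
      simp only [Pi.smul_apply, Finset.sum_apply, Pi.sub_apply, smul_eq_mul]
      have hpC := (hp C hC).ne'
      field_simp
    rw [Finset.sum_congr rfl e1, ← Finset.mul_sum,
      hsum_part (fun i => J k i - grad (f i) xs k)]
    simp [Finset.sum_sub_distrib, hcritk, hm, Finset.sum_apply]
  -- decomposition g = A + (m - h)
  have hdecomp : ∀ C, g C x J = A C + (m - h C J) := by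
    intro C
    rw [hg, hh, hA]
    funext k
    simp only [Pi.add_apply, Pi.sub_apply, Pi.smul_apply, Finset.sum_apply,
      smul_eq_mul, Finset.sum_sub_distrib, hm]
    ring
  -- expansion of the square
  have expand : ∀ C, sq2 (m - h C J)
      = sq2 m - 2 * (∑ k, m k * h C J k) + sq2 (h C J) := by
    intro C
    unfold sq2
    rw [Finset.mul_sum, ← Finset.sum_sub_distrib, ← Finset.sum_add_distrib]
    refine Finset.sum_congr rfl fun k _ => ?_
    simp only [Pi.sub_apply]
    ring
  have swap : ∑ C ∈ G, p C * (∑ k, m k * h C J k) = sq2 m := by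
    calc ∑ C ∈ G, p C * (∑ k, m k * h C J k)
        = ∑ C ∈ G, ∑ k, m k * (p C * h C J k) := by
          refine Finset.sum_congr rfl fun C _ => ?_
          rw [Finset.mul_sum]
          exact Finset.sum_congr rfl fun k _ => by ring
      _ = ∑ k, ∑ C ∈ G, m k * (p C * h C J k) := Finset.sum_comm
      _ = ∑ k, m k * ∑ C ∈ G, p C * h C J k := by
          refine Finset.sum_congr rfl fun k _ => (Finset.mul_sum _ _ _).symm
      _ = ∑ k, m k * m k := by simp_rw [hkey]
      _ = sq2 m := by unfold sq2; exact Finset.sum_congr rfl fun k _ => (sq (m k)).symm ▸ by ring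
  have hm0 : 0 ≤ sq2 m := Finset.sum_nonneg fun k _ => sq_nonneg _
  have step3 : ∑ C ∈ G, p C * sq2 (m - h C J) ≤ ∑ C ∈ G, p C * sq2 (h C J) := by
    have e : ∑ C ∈ G, p C * sq2 (m - h C J)
        = ∑ C ∈ G, p C * sq2 (h C J) - sq2 m := by
      calc ∑ C ∈ G, p C * sq2 (m - h C J)
          = ∑ C ∈ G, (p C * sq2 m - 2 * (p C * (∑ k, m k * h C J k))
              + p C * sq2 (h C J)) := by
            refine Finset.sum_congr rfl fun C _ => ?_
            rw [expand C]; ring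
        _ = (∑ C ∈ G, p C) * sq2 m - 2 * (∑ C ∈ G, p C * (∑ k, m k * h C J k))
              + ∑ C ∈ G, p C * sq2 (h C J) := by
            rw [Finset.sum_add_distrib, Finset.sum_sub_distrib, ← Finset.mul_sum,
              Finset.sum_mul]
        _ = ∑ C ∈ G, p C * sq2 (h C J) - sq2 m := by rw [hp1, swap]; ring
    linarith
  calc ∑ C ∈ G, p C * sq2 (g C x J)
      ≤ ∑ C ∈ G, (2 * (p C * sq2 (A C)) + 2 * (p C * sq2 (m - h C J))) := by
        refine Finset.sum_le_sum fun C hC => ?_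
        rw [hdecomp C]
        have h1 := sq2_add_le (A C) (m - h C J)
        have hpC := (hp C hC).le
        nlinarith
    _ = 2 * ∑ C ∈ G, p C * sq2 (A C) + 2 * ∑ C ∈ G, p C * sq2 (m - h C J) := by
        rw [Finset.sum_add_distrib, ← Finset.mul_sum, ← Finset.mul_sum]
    _ ≤ 2 * ∑ C ∈ G, p C * sq2 (A C) + 2 * ∑ C ∈ G, p C * sq2 (h C J) := by
        linarith
end
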